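/- Multi-step recursion bound for the safe sets (Lemma 2 of the paper): for all times t₀ ≤ t ≤ i, Ŝ_t ∩ G_t^{i+1}(l, Ŝ_t) ⊆ Ŝ_i; in particular |Ŝ_i| ≥ |Ŝ_t ∩ G_t^{i+1}(l, Ŝ_t)|. -/
import Mathlib


/-- Combined Lipschitz bound `L(s, s', τ, τ') = L_s·d_s(s,s') + L_t·|τ − τ'|·Δ`. -/
def Lfun {S : Type*} (ds : S → S → ℝ) (Ls Lt Δ : ℝ) (s s' : S) (τ τ' : ℕ) : ℝ :=
  Ls * ds s s' + Lt * |(τ : ℝ) - (τ' : ℝ)| * Δ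

/-- One-step safe set `S_t(l, X)` (for `t ≥ 1`). -/
def oneStepSafe {S : Type*} (ds : S → S → ℝ) (Ls Lt Δ h : ℝ) (l : ℕ → S → ℝ)
    (X : Set S) (t : ℕ) : Set S :=
  {s | ∃ s' ∈ X, l (t - 1) s' - Lfun ds Ls Lt Δ s s' t (t - 1) ≥ h}

/-- Conservative safe set `G_{τ'}^{τ}(l, X)` (for `τ' < τ`). -/
def consSafe {S : Type*} (ds : S → S → ℝ) (Ls Lt Δ h : ℝ) (l : ℕ → S → ℝ)
    (X : Set S) (τ' τ : ℕ) : Set S :=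
  {s | ∃ s' ∈ X, l τ' s' - Lfun ds Ls Lt Δ s s' τ τ' ≥ h}
/-- One-step reachable set: `X` together with the states reachable from `X` in one step. -/
def Rreach {S A : Type*} (f : S → A → S) (X : Set S) : Set S :=
  X ∪ {s | ∃ s' ∈ X, ∃ a : A, s = f s' a}

/-- One-step returnable set: `X` together with the states from which `X` can be
reached in one step. -/
def Rret {S A : Type*} (f : S → A → S) (X : Set S) : Set S :=
  X ∪ {s | ∃ a : A, f s a ∈ X}

/-- The recursively defined safe sets: `hatS … i = Ŝ_i`, with `Ŝ_{t₀} = X₀` and, for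
`i > t₀`, `Ŝ_i = S_i(l, Ŝ_{i−1}) ∩ R_reach(Ŝ_{i−1}) ∩ R_ret(G_{i−1}^{i+1}(l, Ŝ_{i−1}))`. -/
def hatS {S A : Type*} (f : S → A → S) (ds : S → S → ℝ) (Ls Lt Δ h : ℝ)
    (l : ℕ → S → ℝ) (t₀ : ℕ) (X₀ : Set S) : ℕ → Set S := fun i =>
  Nat.rec X₀
    (fun n prev =>
      oneStepSafe ds Ls Lt Δ h l prev (t₀ + n + 1) ∩ Rreach f prev ∩
        Rret f (consSafe ds Ls Lt Δ h l prev (t₀ + n) (t₀ + n + 2)))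
    (i - t₀)

lemma hatS_succ {S A : Type*} (f : S → A → S) (ds : S → S → ℝ) (Ls Lt Δ h : ℝ)
    (l : ℕ → S → ℝ) (t₀ : ℕ) (X₀ : Set S) (i : ℕ) (hi : t₀ ≤ i) :
    hatS f ds Ls Lt Δ h l t₀ X₀ (i + 1) =
      oneStepSafe ds Ls Lt Δ h l (hatS f ds Ls Lt Δ h l t₀ X₀ i) (i + 1) ∩
        Rreach f (hatS f ds Ls Lt Δ h l t₀ X₀ i) ∩
        Rret f (consSafe ds Ls Lt Δ h l (hatS f ds Ls Lt Δ h l t₀ X₀ i) i (i + 2)) := by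
  obtain ⟨k, rfl⟩ := Nat.exists_eq_add_of_le hi
  have e1 : t₀ + k + 1 - t₀ = k + 1 := by omega
  have e2 : t₀ + k - t₀ = k := by omega
  unfold hatS
  rw [e1, e2]

lemma LtΔ_mono (Lt Δ : ℝ) (hLt : 0 ≤ Lt) (hΔ : 0 ≤ Δ) {x y z : ℝ} (hxyz : z + x ≤ y) :
    Lt * z * Δ + Lt * x * Δ ≤ Lt * y * Δ := by
  have h1 : Lt * z * Δ + Lt * x * Δ = Lt * (z + x) * Δ := by ring
  rw [h1]
  exact mul_le_mul_of_nonneg_right (mul_le_mul_of_nonneg_left hxyz hLt) hΔ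

theorem hatS_multi_step_recursion_bound {S A : Type*} [Fintype S] [Fintype A]
    (f : S → A → S)
    (ds : S → S → ℝ) (hds_nonneg : ∀ s s' : S, 0 ≤ ds s s')
    (hds_refl : ∀ s : S, ds s s = 0)
    (Ls Lt Δ : ℝ) (hLs : 0 ≤ Ls) (hLt : 0 ≤ Lt) (hΔ : 0 ≤ Δ) (h : ℝ)
    (l : ℕ → S → ℝ)
    (hl_temp : ∀ (τ τ' : ℕ) (s : S), l τ s ≥ l τ' s - Lt * |(τ : ℝ) - (τ' : ℝ)| * Δ)
    (t₀ : ℕ) (ht₀ : 1 ≤ t₀) (X₀ : Set S)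
    (t i : ℕ) (ht : t₀ ≤ t) (hti : t ≤ i) :
    hatS f ds Ls Lt Δ h l t₀ X₀ t ∩
        consSafe ds Ls Lt Δ h l (hatS f ds Ls Lt Δ h l t₀ X₀ t) t (i + 1) ⊆
      hatS f ds Ls Lt Δ h l t₀ X₀ i ∧
    (hatS f ds Ls Lt Δ h l t₀ X₀ t ∩
        consSafe ds Ls Lt Δ h l (hatS f ds Ls Lt Δ h l t₀ X₀ t) t (i + 1)).ncard ≤
      (hatS f ds Ls Lt Δ h l t₀ X₀ i).ncard := by
  have key : ∀ i, t ≤ i →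
      hatS f ds Ls Lt Δ h l t₀ X₀ t ∩
          consSafe ds Ls Lt Δ h l (hatS f ds Ls Lt Δ h l t₀ X₀ t) t (i + 1) ⊆
        hatS f ds Ls Lt Δ h l t₀ X₀ i := by
    intro i hi
    induction i, hi using Nat.le_induction with
    | base => exact Set.inter_subset_left
    | succ i hle ih =>
      rw [hatS_succ f ds Ls Lt Δ h l t₀ X₀ i (le_trans ht hle)]
      rintro s ⟨hsT, s', hs'T, hineq⟩
      have hbt : (t : ℝ) ≤ (i : ℝ) := by exact_mod_cast hle
      -- rewrite the absolute value in hineq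
      have habs2 : |((i + 1 + 1 : ℕ) : ℝ) - (t : ℝ)| = (i : ℝ) + 2 - t := by
        rw [abs_of_nonneg (by push_cast; linarith)]; push_cast; ring
      rw [Lfun, habs2] at hineq
      have habs1 : |((i + 1 : ℕ) : ℝ) - (t : ℝ)| = (i : ℝ) + 1 - t := by
        rw [abs_of_nonneg (by push_cast; linarith)]; push_cast; ring
      have hd : 0 ≤ Ls * ds s s' := mul_nonneg hLs (hds_nonneg s s')
      -- s ∈ Ŝ_i
      have hsI : s ∈ hatS f ds Ls Lt Δ h l t₀ X₀ i := by
        apply ih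
        refine ⟨hsT, s', hs'T, ?_⟩
        rw [Lfun, habs1]
        have := LtΔ_mono Lt Δ hLt hΔ (x := (i : ℝ) + 1 - t) (y := (i : ℝ) + 2 - t)
          (z := 0) (by linarith)
        linarith [this]
      -- s' ∈ Ŝ_i
      have hs'I : s' ∈ hatS f ds Ls Lt Δ h l t₀ X₀ i := by
        apply ih
        refine ⟨hs'T, s', hs'T, ?_⟩
        rw [Lfun, habs1, hds_refl s']
        have := LtΔ_mono Lt Δ hLt hΔ (x := (i : ℝ) + 1 - t) (y := (i : ℝ) + 2 - t)
          (z := 0) (by linarith)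
        linarith [this]
      -- temporal consistency from t to i
      have htemp : l i s' ≥ l t s' - Lt * ((i : ℝ) - t) * Δ := by
        have := hl_temp i t s'
        rwa [abs_of_nonneg (by linarith)] at this
      refine ⟨⟨⟨s', hs'I, ?_⟩, Or.inl hsI⟩, Or.inl ⟨s', hs'I, ?_⟩⟩
      · -- one-step safe at time i+1
        have hsub : i + 1 - 1 = i := by omega
        rw [hsub, Lfun]
        have habs0 : |((i + 1 : ℕ) : ℝ) - ((i : ℕ) : ℝ)| = 1 := by
          rw [abs_of_nonneg (by push_cast; linarith)]; push_cast; ring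
        rw [habs0]
        have := LtΔ_mono Lt Δ hLt hΔ (x := (1 : ℝ)) (y := (i : ℝ) + 2 - t)
          (z := (i : ℝ) - t) (by linarith)
        linarith [this]
      · -- conservative safety from i to i+2
        rw [Lfun]
        have habs0 : |((i + 2 : ℕ) : ℝ) - ((i : ℕ) : ℝ)| = 2 := by
          rw [abs_of_nonneg (by push_cast; linarith)]; push_cast; ring
        rw [habs0]
        have := LtΔ_mono Lt Δ hLt hΔ (x := (2 : ℝ)) (y := (i : ℝ) + 2 - t)
          (z := (i : ℝ) - t) (by linarith)
        linarith [this]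
  refine ⟨key i hti, ?_⟩
  exact Set.ncard_le_ncard (key i hti) (Set.toFinite _)
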